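/- For t > 0, define g(t) = (1/√π) ∫_{−π/t}^{π/t} exp(−x²·φ(i·x·t)) dx (a complex-valued integral), where φ(z) = 2(e^z − 1 − z)/z², φ(0) = 1. Then lim_{t→0⁺} g(t) = 1. -/

import Mathlib

noncomputable def φC (z : ℂ) : ℂ :=
  if z = 0 then 1 else 2 * (Complex.exp z - 1 - z) / z ^ 2

noncomputable def g (t : ℝ) : ℂ :=
  (Real.sqrt Real.pi : ℂ)⁻¹ *
    ∫ x in (-(Real.pi / t))..(Real.pi / t),
      Complex.exp (-((x : ℂ) ^ 2 * φC (Complex.I * x * t)))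

/-!
For `|x| ≤ π / t` the argument `θ = x t` lies in `[-π, π]`, where
`Re φ(iθ) = 2 (1 - cos θ) / θ² ≥ 4 / π²` by Jordan's inequality `1 - cos θ ≥ 2 θ² / π²`. Hence the
integrand is dominated by the Gaussian `exp (-4 x² / π²)` uniformly in `t`. As `t → 0⁺` the window
exhausts `ℝ` and `φ(ixt) → φ(0) = 1`, so by dominated convergence the integral tends to
`∫ exp (-x²) = √π`.
-/

open Complex Real MeasureTheory Filter Set Topology

theorem tendsto_intervalIntegral_symm_of_dominated {E ι : Type*} [NormedAddCommGroup E]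
    [NormedSpace ℝ E] {l : Filter ι} [l.IsCountablyGenerated] {F : ι → ℝ → E} {f : ℝ → E}
    {R : ι → ℝ} (bound : ℝ → ℝ) (hR : Tendsto R l atTop)
    (hF_meas : ∀ᶠ i in l, AEStronglyMeasurable (F i))
    (h_bound : ∀ᶠ i in l, ∀ x ∈ Ioc (-R i) (R i), ‖F i x‖ ≤ bound x)
    (bound_integrable : Integrable bound) (h_lim : ∀ x, Tendsto (fun i ↦ F i x) l (𝓝 (f x))) :
    Tendsto (fun i ↦ ∫ x in -R i..R i, F i x) l (𝓝 (∫ x, f x)) := by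
  have h_indicator : (fun i ↦ ∫ x, (Ioc (-R i) (R i)).indicator (F i) x)
      =ᶠ[l] fun i ↦ ∫ x in -R i..R i, F i x := by
    filter_upwards [hR.eventually_ge_atTop 0] with i hi
    rw [intervalIntegral.integral_of_le (by linarith), integral_indicator measurableSet_Ioc]
  refine (tendsto_integral_filter_of_dominated_convergence (‖bound ·‖) ?_ ?_
    bound_integrable.norm ?_).congr' h_indicator
  · filter_upwards [hF_meas] with i hi using hi.indicator measurableSet_Ioc
  · filter_upwards [h_bound] with i hi
    refine ae_of_all _ fun x ↦ ?_
    by_cases hx : x ∈ Ioc (-R i) (R i)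
    · simpa [indicator_of_mem hx] using (hi x hx).trans (le_abs_self _)
    · simp [indicator_of_notMem hx]
  · refine ae_of_all _ fun x ↦ (h_lim x).congr' ?_
    filter_upwards [hR.eventually_gt_atTop |x|] with i hi
    have hx : x ∈ Ioc (-R i) (R i) := ⟨by linarith [neg_abs_le x], by linarith [le_abs_self x]⟩
    rw [indicator_of_mem hx]

theorem integral_cexp_neg_sq : ∫ x : ℝ, cexp (-(x : ℂ) ^ 2) = (√π : ℂ) := by
  calc ∫ x : ℝ, cexp (-(x : ℂ) ^ 2)
      = ∫ x : ℝ, ((rexp (-1 * x ^ 2) : ℝ) : ℂ) := by simp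
    _ = ((∫ x : ℝ, rexp (-1 * x ^ 2) : ℝ) : ℂ) := integral_ofReal
    _ = (√π : ℂ) := by rw [integral_gaussian, div_one]

theorem norm_φC_sub_one_le {z : ℂ} (hz : ‖z‖ ≤ 1) : ‖φC z - 1‖ ≤ ‖z‖ := by
  rcases eq_or_ne z 0 with rfl | hz0
  · simp [φC]
  have h_taylor : ‖cexp z - (1 + z + z ^ 2 / 2)‖ ≤ ‖z‖ ^ 3 * (2 / 9) := by
    convert Complex.exp_bound hz (n := 3) (by norm_num) using 3
    · simp [Finset.sum_range_succ, Nat.factorial]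
    · norm_num [Nat.factorial]
  have h_eq : φC z - 1 = 2 * (cexp z - (1 + z + z ^ 2 / 2)) / z ^ 2 := by
    rw [φC, if_neg hz0]
    field_simp
    ring
  have hz_pos : 0 < ‖z‖ := norm_pos_iff.mpr hz0
  rw [h_eq, norm_div, norm_mul, Complex.norm_two, norm_pow, div_le_iff₀ (by positivity)]
  nlinarith

@[fun_prop]
theorem continuous_φC : Continuous φC := by
  refine continuous_iff_continuousAt.mpr fun z ↦ ?_
  rcases eq_or_ne z 0 with rfl | hz
  · have h : Tendsto (fun w : ℂ ↦ ‖w‖) (𝓝 0) (𝓝 0) := by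
      simpa using (continuous_norm.tendsto (0 : ℂ))
    rw [ContinuousAt, φC, if_pos rfl, tendsto_iff_norm_sub_tendsto_zero]
    refine squeeze_zero_norm' ?_ h
    filter_upwards [Metric.closedBall_mem_nhds (0 : ℂ) one_pos] with w hw
    simpa using norm_φC_sub_one_le (mem_closedBall_zero_iff.mp hw)
  · have h : ContinuousAt (fun w : ℂ ↦ 2 * (cexp w - 1 - w) / w ^ 2) z :=
      ContinuousAt.div (by fun_prop) (by fun_prop) (pow_ne_zero 2 hz)
    refine h.congr ?_
    filter_upwards [isOpen_ne.mem_nhds hz] with w hw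
    simp [φC, hw]

theorem re_φC_I_mul {θ : ℝ} (hθ : θ ≠ 0) : (φC (I * θ)).re = 2 * (1 - Real.cos θ) / θ ^ 2 := by
  have h_sq : (I * θ) ^ 2 = ((-θ ^ 2 : ℝ) : ℂ) := by
    push_cast
    rw [mul_pow, I_sq]
    ring
  rw [φC, if_neg (by simp [hθ]), h_sq, div_ofReal_re, mul_comm I]
  simp only [mul_re, re_ofNat, sub_re, exp_ofReal_mul_I_re, one_re, ofReal_re, I_re, mul_zero,
    ofReal_im, I_im, mul_one, sub_self, sub_zero, im_ofNat, sub_im, exp_ofReal_mul_I_im, one_im,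
    mul_im, add_zero, zero_mul]
  field_simp
  ring

theorem four_div_pi_sq_le_re_φC_I_mul {θ : ℝ} (hθ : |θ| ≤ π) : 4 / π ^ 2 ≤ (φC (I * θ)).re := by
  rcases eq_or_ne θ 0 with rfl | hθ0
  · simp only [ofReal_zero, mul_zero, φC, if_true, one_re]
    rw [div_le_one (by positivity)]
    nlinarith [pi_gt_three]
  rw [re_φC_I_mul hθ0, le_div_iff₀ (by positivity), div_mul_eq_mul_div, div_le_iff₀ (by positivity)]
  have h_cos := mul_le_mul_of_nonneg_right (cos_le_one_sub_mul_cos_sq hθ) (sq_nonneg π)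
  have h_cancel : 2 / π ^ 2 * θ ^ 2 * π ^ 2 = 2 * θ ^ 2 := by field_simp
  nlinarith

theorem norm_cexp_neg_sq_mul_φC_le (x : ℝ) {θ : ℝ} (hθ : |θ| ≤ π) :
    ‖cexp (-((x : ℂ) ^ 2 * φC (I * θ)))‖ ≤ rexp (-(4 / π ^ 2) * x ^ 2) := by
  rw [norm_exp, Real.exp_le_exp, neg_re, ← ofReal_pow, re_ofReal_mul]
  nlinarith [four_div_pi_sq_le_re_φC_I_mul hθ, sq_nonneg x]

theorem g_tendsto_one :
    Filter.Tendsto g (nhdsWithin 0 (Set.Ioi 0)) (nhds 1) := by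
  have h_window : Tendsto (fun t : ℝ ↦ π / t) (𝓝[>] 0) atTop :=
    tendsto_inv_nhdsGT_zero.const_mul_atTop pi_pos
  have h_integral := tendsto_intervalIntegral_symm_of_dominated
    (F := fun t x : ℝ ↦ cexp (-((x : ℂ) ^ 2 * φC (I * x * t))))
    (f := fun x : ℝ ↦ cexp (-(x : ℂ) ^ 2)) _ h_window ?_ ?_
    (integrable_exp_neg_mul_sq (by positivity : 0 < 4 / π ^ 2)) ?_
  · have h_sqrt_pi : (√π : ℂ) ≠ 0 := ofReal_ne_zero.mpr (sqrt_ne_zero'.mpr pi_pos)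
    have h := h_integral.const_mul (√π : ℂ)⁻¹
    rwa [integral_cexp_neg_sq, inv_mul_cancel₀ h_sqrt_pi] at h
  · exact .of_forall fun t ↦ (by fun_prop : Continuous _).aestronglyMeasurable
  · filter_upwards [self_mem_nhdsWithin] with t (ht : 0 < t) x hx
    have h_arg : I * x * t = I * ((x * t : ℝ) : ℂ) := by push_cast; ring
    rw [h_arg]
    refine norm_cexp_neg_sq_mul_φC_le x ?_
    rw [abs_mul, abs_of_pos ht, ← le_div_iff₀ ht]
    exact abs_le.mpr ⟨hx.1.le, hx.2⟩
  · intro x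
    have h : Continuous fun t : ℝ ↦ cexp (-((x : ℂ) ^ 2 * φC (I * x * t))) := by
      fun_prop
    simpa [φC] using (h.tendsto 0).mono_left nhdsWithin_le_nhds
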